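/- arXiv:2304.07497 — 5 statements merged into one kernel-verified Lean document; each statement's English description precedes it below -/
import Mathlib

section
/- Let $\vartheta_1 > 0$, $\vartheta_2 > 0$, $\vartheta_3 > 0$, $0 < m < 1$ and $\nu \in (0,1)$. Suppose $V : [0,\infty) \to [0,\infty)$ is differentiable and satisfies the differential inequality $\dot V(t) \le -\vartheta_1 V(t) - \vartheta_2 V(t)^m + \vartheta_3$ for all $t \ge 0$. Define the settling time bound $T_s^* := \max\{ \tfrac{1}{\nu\vartheta_1(1-m)} \ln\tfrac{\nu\vartheta_1 V(0)^{1-m} + \vartheta_2}{\vartheta_2},\ \tfrac{1}{\vartheta_1(1-m)} \ln\tfrac{\vartheta_1 V(0)^{1-m} + \nu\vartheta_2}{\nu\vartheta_2} \}$. Then for every $t \ge T_s^*$ one has $V(t) \le \min\{ \tfrac{\vartheta_3}{(1-\nu)\vartheta_1},\ (\tfrac{\vartheta_3}{(1-\nu)\vartheta_2})^{1/m} \}$ (practical fast finite-time stability). -/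
/-!
Above the level `B₁ = ϑ₃ / ((1 - ν) ϑ₁)` the constant `ϑ₃` is absorbed by `(1 - ν) ϑ₁ V`, leaving
`V' ≤ -ν ϑ₁ V - ϑ₂ V^m`; above `B₂ = (ϑ₃ / ((1 - ν) ϑ₂))^(1/m)` it is absorbed by
`(1 - ν) ϑ₂ V^m`, leaving `V' ≤ -ϑ₁ V - ν ϑ₂ V^m`. Whenever `V' ≤ -a V - b V^m` and `V > 0`,
the function `W = V^(1-m)` satisfies the linear inequality `W' ≤ -(1 - m)(a W + b)`, so by
Grönwall `W` would be `≤ 0` at the settling time. Hence `V` reaches the level before that time,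
and it never crosses the level afterwards since `V' < 0` there.
-/

open Set Real

/-- The time at which the solution of `W' = -(1 - m)(a W + b)`, `W 0 = v₀^(1-m)`, reaches `0`. -/
noncomputable def settlingTime (a b m v₀ : ℝ) : ℝ :=
  1 / (a * (1 - m)) * log ((a * v₀ ^ (1 - m) + b) / b)

lemma settlingTime_nonneg {a b m v₀ : ℝ} (ha : 0 < a) (hb : 0 < b) (hm : m < 1) (hv₀ : 0 ≤ v₀) :
    0 ≤ settlingTime a b m v₀ := by
  have h1m : 0 < 1 - m := sub_pos.2 hm
  have : 0 ≤ v₀ ^ (1 - m) := rpow_nonneg hv₀ _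
  refine mul_nonneg (by positivity) (log_nonneg ?_)
  rw [le_div_iff₀ hb]
  nlinarith

lemma gronwallBound_settlingTime {a b m v₀ : ℝ} (ha : 0 < a) (hb : 0 < b) (hm : m < 1)
    (hv₀ : 0 ≤ v₀) :
    gronwallBound (v₀ ^ (1 - m)) (-(a * (1 - m))) (-((1 - m) * b)) (settlingTime a b m v₀) = 0 := by
  have h1m : 1 - m ≠ 0 := (sub_pos.2 hm).ne'
  have hα : a * (1 - m) ≠ 0 := mul_ne_zero ha.ne' h1m
  have hw : 0 ≤ v₀ ^ (1 - m) := rpow_nonneg hv₀ _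
  have hexp : exp (-(a * (1 - m)) * settlingTime a b m v₀) = b / (a * v₀ ^ (1 - m) + b) := by
    rw [settlingTime, neg_mul, ← mul_assoc, mul_one_div_cancel hα, one_mul, exp_neg,
      exp_log (by positivity), inv_div]
  rw [gronwallBound_of_K_ne_0 (neg_ne_zero.2 hα)]
  dsimp only
  rw [hexp]
  field_simp
  ring

lemma one_sub_mul_deriv_rpow_le {a b m v y : ℝ} (hm : m < 1) (hy : 0 < y)
    (hv : v ≤ -a * y - b * y ^ m) :
    v * (1 - m) * y ^ (1 - m - 1) ≤ -(a * (1 - m)) * y ^ (1 - m) + -((1 - m) * b) := by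
  have h1m : 0 < 1 - m := sub_pos.2 hm
  have hy₁ : y ^ (1 - m - 1) * y = y ^ (1 - m) := by
    rw [← rpow_add_one hy.ne', sub_add_cancel]
  have hym : y ^ (1 - m - 1) * y ^ m = 1 := by
    rw [← rpow_add hy, sub_sub_cancel_left, neg_add_cancel, rpow_zero]
  calc v * (1 - m) * y ^ (1 - m - 1)
      ≤ (-a * y - b * y ^ m) * (1 - m) * y ^ (1 - m - 1) := by gcongr
    _ = -(a * (1 - m)) * (y ^ (1 - m - 1) * y) + -((1 - m) * b) * (y ^ (1 - m - 1) * y ^ m) := by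
        ring
    _ = -(a * (1 - m)) * y ^ (1 - m) + -((1 - m) * b) := by rw [hy₁, hym, mul_one]

lemma rpow_one_sub_le_gronwallBound {V : ℝ → ℝ} {a b m T : ℝ} (hm : m < 1) (hT : 0 ≤ T)
    (hdiff : ∀ t ∈ Icc 0 T, DifferentiableAt ℝ V t) (hpos : ∀ t ∈ Icc 0 T, 0 < V t)
    (hder : ∀ t ∈ Icc 0 T, deriv V t ≤ -a * V t - b * V t ^ m) :
    V T ^ (1 - m) ≤ gronwallBound (V 0 ^ (1 - m)) (-(a * (1 - m))) (-((1 - m) * b)) T := by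
  have hW : ∀ t ∈ Icc 0 T, HasDerivAt (fun s => V s ^ (1 - m))
      (deriv V t * (1 - m) * V t ^ (1 - m - 1)) t := fun t ht =>
    (hdiff t ht).hasDerivAt.rpow_const (Or.inl (hpos t ht).ne')
  have := le_gronwallBound_of_liminf_deriv_right_le
    (fun t ht => (hW t ht).continuousAt.continuousWithinAt)
    (fun t ht _ hr => (hW t (Ico_subset_Icc_self ht)).hasDerivWithinAt.liminf_right_slope_le hr)
    le_rfl
    (fun t ht => one_sub_mul_deriv_rpow_le hm (hpos t (Ico_subset_Icc_self ht))
      (hder t (Ico_subset_Icc_self ht)))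
    T ⟨hT, le_rfl⟩
  rwa [sub_zero] at this

lemma le_of_deriv_neg_of_eq {V : ℝ → ℝ} {t₀ B : ℝ}
    (hdiff : ∀ t, t₀ ≤ t → DifferentiableAt ℝ V t)
    (hder : ∀ t, t₀ ≤ t → V t = B → deriv V t < 0) (h₀ : V t₀ ≤ B) :
    ∀ t, t₀ ≤ t → V t ≤ B := fun t ht =>
  image_le_of_deriv_right_lt_deriv_boundary' (a := t₀) (b := t) (B := fun _ => B) (B' := 0)
    (fun s hs => (hdiff s hs.1).continuousAt.continuousWithinAt)
    (fun s hs => (hdiff s hs.1).hasDerivAt.hasDerivWithinAt) h₀ continuousOn_const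
    (fun _ _ => hasDerivWithinAt_const _ _ _) (fun s hs => hder s hs.1) ⟨ht, le_rfl⟩

lemma exists_le_of_deriv_le {V : ℝ → ℝ} {a b m B : ℝ} (ha : 0 < a) (hb : 0 < b) (hm : m < 1)
    (hB : 0 < B) (hV₀ : 0 ≤ V 0) (hdiff : ∀ t, 0 ≤ t → DifferentiableAt ℝ V t)
    (hder : ∀ t, 0 ≤ t → B ≤ V t → deriv V t ≤ -a * V t - b * V t ^ m) :
    ∃ t ∈ Icc 0 (settlingTime a b m (V 0)), V t ≤ B := by
  set T := settlingTime a b m (V 0)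
  have hT : 0 ≤ T := settlingTime_nonneg ha hb hm hV₀
  by_contra! hgt
  have hpos : ∀ t ∈ Icc 0 T, 0 < V t := fun t ht => hB.trans (hgt t ht)
  have hle := rpow_one_sub_le_gronwallBound hm hT (fun t ht => hdiff t ht.1) hpos
    (fun t ht => hder t ht.1 (hgt t ht).le)
  rw [gronwallBound_settlingTime ha hb hm hV₀] at hle
  exact (rpow_pos_of_pos (hpos T ⟨hT, le_rfl⟩) _).not_ge hle

lemma le_of_settlingTime_le {V : ℝ → ℝ} {a b m B : ℝ} (ha : 0 < a) (hb : 0 < b) (hm : m < 1)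
    (hB : 0 < B) (hV₀ : 0 ≤ V 0) (hdiff : ∀ t, 0 ≤ t → DifferentiableAt ℝ V t)
    (hder : ∀ t, 0 ≤ t → B ≤ V t → deriv V t ≤ -a * V t - b * V t ^ m) :
    ∀ t, settlingTime a b m (V 0) ≤ t → V t ≤ B := by
  obtain ⟨t₀, ⟨ht₀, ht₀T⟩, hVt₀⟩ := exists_le_of_deriv_le ha hb hm hB hV₀ hdiff hder
  have hneg : ∀ t, t₀ ≤ t → V t = B → deriv V t < 0 := fun t ht hVt => by
    have hVm : 0 < V t ^ m := rpow_pos_of_pos (hVt ▸ hB) m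
    nlinarith [hder t (ht₀.trans ht) hVt.ge]
  exact fun t ht => le_of_deriv_neg_of_eq (fun s hs => hdiff s (ht₀.trans hs)) hneg hVt₀ t
    (ht₀T.trans ht)

/-- Lemma 1 (practical fast finite-time stability, scalar differential-inequality
form): if a nonnegative differentiable function `V` satisfies
`V' ≤ -ϑ₁ V - ϑ₂ V^m + ϑ₃` on `[0,∞)`, then after the settling time `Tₛ*`
the value of `V` stays in the explicit residual set. -/
theorem practical_fast_finite_time_stability
    (ϑ₁ ϑ₂ ϑ₃ m ν : ℝ)
    (hϑ₁ : 0 < ϑ₁) (hϑ₂ : 0 < ϑ₂) (hϑ₃ : 0 < ϑ₃)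
    (hm : 0 < m) (hm1 : m < 1) (hν : ν ∈ Set.Ioo (0 : ℝ) 1)
    (V : ℝ → ℝ)
    (hVnonneg : ∀ t, 0 ≤ t → 0 ≤ V t)
    (hVdiff : ∀ t, 0 ≤ t → DifferentiableAt ℝ V t)
    (hVineq : ∀ t, 0 ≤ t →
      deriv V t ≤ -ϑ₁ * V t - ϑ₂ * (V t) ^ m + ϑ₃) :
    ∀ t ≥ max ((1 / (ν * ϑ₁ * (1 - m))) *
          Real.log ((ν * ϑ₁ * (V 0) ^ (1 - m) + ϑ₂) / ϑ₂))
        ((1 / (ϑ₁ * (1 - m))) *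
          Real.log ((ϑ₁ * (V 0) ^ (1 - m) + ν * ϑ₂) / (ν * ϑ₂))),
      V t ≤ min (ϑ₃ / ((1 - ν) * ϑ₁)) ((ϑ₃ / ((1 - ν) * ϑ₂)) ^ (1 / m)) := by
  obtain ⟨hν₀, hν₁⟩ := hν
  have h1ν : 0 < 1 - ν := sub_pos.2 hν₁
  have hV₀ := hVnonneg 0 le_rfl
  have hlin := le_of_settlingTime_le (mul_pos hν₀ hϑ₁) hϑ₂ hm1
    (show 0 < ϑ₃ / ((1 - ν) * ϑ₁) by positivity) hV₀ hVdiff fun t ht hBV => by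
      have : ϑ₃ ≤ (1 - ν) * ϑ₁ * V t := by rwa [div_le_iff₀' (by positivity)] at hBV
      linarith [hVineq t ht]
  have hpow := le_of_settlingTime_le hϑ₁ (mul_pos hν₀ hϑ₂) hm1
    (show 0 < (ϑ₃ / ((1 - ν) * ϑ₂)) ^ (1 / m) by positivity) hV₀ hVdiff fun t ht hBV => by
      have hBVm := rpow_le_rpow (by positivity) hBV hm.le
      rw [← rpow_mul (by positivity), one_div_mul_cancel hm.ne', rpow_one,
        div_le_iff₀' (by positivity)] at hBVm
      linarith [hVineq t ht]
  exact fun t ht => le_min (hlin t ((le_max_left _ _).trans ht))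
    (hpow t ((le_max_right _ _).trans ht))
end

section
/- For every real number $\sigma$ and every constant $\kappa > 0$ one has $0 \le |\sigma| - \sigma \tanh(\sigma/\kappa) \le 0.2785\,\kappa$. -/
/-!
Since `σ ↦ σ tanh (σ / κ)` is even, putting `x = |σ| / κ` turns the quantity into
`κ · x (1 - tanh x) = κ · 2x / (e^{2x} + 1)`. So everything reduces to `t ≤ c (e^t + 1)` for all
real `t`, which follows from the tangent-line bound `e^s ≥ 1 + s` at `s = t - 1 - c` as soon as
`c e^{1 + c} ≥ 1`; for `c = 0.2785` this is a numerical check on `e^{1.2785}`.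
-/

open Real

namespace Real

theorem one_sub_tanh_eq (x : ℝ) : 1 - tanh x = 2 / (exp (2 * x) + 1) := by
  have hx : exp (2 * x) = exp x * exp x := by rw [← exp_add, two_mul]
  have hneg : exp (-x) * exp x = 1 := by rw [← exp_add, neg_add_cancel, exp_zero]
  rw [tanh_eq, hx]
  field_simp
  linear_combination 2 * exp x * hneg

theorem abs_mul_tanh_abs_div (σ κ : ℝ) : |σ| * tanh (|σ| / κ) = σ * tanh (σ / κ) := by
  rcases abs_cases σ with ⟨h, _⟩ | ⟨h, _⟩
  · rw [h]
  · rw [h, neg_div, tanh_neg, neg_mul_neg]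

theorem le_mul_exp_add_one {c : ℝ} (hc : 0 < c) (h : 1 ≤ c * exp (1 + c)) (t : ℝ) :
    t ≤ c * (exp t + 1) := by
  rcases lt_or_ge t c with htc | htc
  · nlinarith [exp_pos t]
  · have htangent : t - c ≤ exp (t - (1 + c)) := by linarith [add_one_le_exp (t - (1 + c))]
    have hsplit : exp t = exp (t - (1 + c)) * exp (1 + c) := by rw [← exp_add, sub_add_cancel]
    calc t ≤ (t - c) * (c * exp (1 + c)) + c := by nlinarith
      _ ≤ exp (t - (1 + c)) * (c * exp (1 + c)) + c := by gcongr
      _ = c * (exp t + 1) := by rw [hsplit]; ring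

theorem mul_one_sub_tanh_le {c : ℝ} (hc : 0 < c) (h : 1 ≤ c * exp (1 + c)) (x : ℝ) :
    x * (1 - tanh x) ≤ c := by
  rw [one_sub_tanh_eq, mul_div_assoc', div_le_iff₀ (by positivity)]
  linarith [le_mul_exp_add_one hc h (2 * x)]

theorem one_le_mul_exp_one_add_0_2785 : 1 ≤ 0.2785 * exp (1 + 0.2785) := by
  have he : 2.7182818283 < exp 1 := exp_one_gt_d9
  have htaylor : ∑ i ∈ Finset.range 5, (0.2785 : ℝ) ^ i / i.factorial ≤ exp 0.2785 :=
    sum_le_exp_of_nonneg (by norm_num) 5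
  norm_num [Finset.sum_range_succ, Nat.factorial] at htaylor
  rw [exp_add]
  nlinarith [exp_pos 1]

end Real

/-- Lemma 2, first inequality: `0 ≤ |σ| - σ tanh(σ/κ) ≤ 0.2785 κ` for all `σ` and `κ > 0`. -/
theorem abs_sub_mul_tanh_bound (σ κ : ℝ) (hκ : 0 < κ) :
    0 ≤ |σ| - σ * Real.tanh (σ / κ) ∧
    |σ| - σ * Real.tanh (σ / κ) ≤ 0.2785 * κ := by
  set x := |σ| / κ with hx
  have hσ : |σ| = κ * x := by rw [hx, mul_div_cancel₀ _ hκ.ne']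
  have hrewrite : |σ| - σ * tanh (σ / κ) = κ * (x * (1 - tanh x)) := by
    rw [← abs_mul_tanh_abs_div, ← hx, hσ]; ring
  have hx0 : 0 ≤ x := by positivity
  rw [hrewrite, mul_comm 0.2785 κ]
  exact ⟨mul_nonneg hκ.le (mul_nonneg hx0 (sub_nonneg.2 (tanh_lt_one x).le)),
    mul_le_mul_of_nonneg_left
      (mul_one_sub_tanh_le (by norm_num) one_le_mul_exp_one_add_0_2785 x) hκ.le⟩
end

section
/- For every real number $\sigma$ and all constants $\tau_\sigma > 0$, $\varepsilon_\sigma > 0$ one has $0 \le |\sigma| - \sigma^2 \sqrt{\dfrac{\sigma^2 + \tau_\sigma^2 + \varepsilon_\sigma^2}{(\sigma^2 + \tau_\sigma^2)(\sigma^2 + \varepsilon_\sigma^2)}} < \dfrac{\tau_\sigma \varepsilon_\sigma}{\sqrt{\tau_\sigma^2 + \varepsilon_\sigma^2}}$. -/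
/-!
Write `q = (s + a + b) / ((s + a)(s + b))` with `s = σ²`, `a = τ²`, `b = ε²`, and `t = |σ| √q`,
so that the quantity to bound is `|σ| (1 - t)`. The identity `1 - s q = a b / ((s + a)(s + b))`
gives `t² = s q ≤ 1`, hence `0 ≤ t ≤ 1` and the lower bound. For the upper bound,
`(1 - t)² ≤ 1 - t²` on `[0, 1]`, so the square of the quantity is at most
`s (1 - s q) = s a b / ((s + a)(s + b))`, which is below `a b / (a + b)` because
`s (a + b) < (s + a)(s + b)`.
-/

namespace SmoothSign

variable {a b s : ℝ}

lemma one_sub_mul_div_eq (h : (s + a) * (s + b) ≠ 0) :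
    1 - s * ((s + a + b) / ((s + a) * (s + b))) = a * b / ((s + a) * (s + b)) := by
  rw [mul_div_assoc', one_sub_div h]
  ring

lemma mul_div_le_one (hs : 0 ≤ s) (ha : 0 < a) (hb : 0 < b) :
    s * ((s + a + b) / ((s + a) * (s + b))) ≤ 1 := by
  have hd : 0 < (s + a) * (s + b) := by positivity
  have hgap : 0 ≤ a * b / ((s + a) * (s + b)) := by positivity
  linarith [one_sub_mul_div_eq hd.ne']

lemma mul_one_sub_mul_div_lt (hs : 0 ≤ s) (ha : 0 < a) (hb : 0 < b) :
    s * (1 - s * ((s + a + b) / ((s + a) * (s + b)))) < a * b / (a + b) := by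
  have hd : 0 < (s + a) * (s + b) := by positivity
  rw [one_sub_mul_div_eq hd.ne', mul_div_assoc', div_lt_div_iff₀ hd (by positivity)]
  have hab : 0 < a * b := mul_pos ha hb
  nlinarith [mul_nonneg (mul_nonneg hs hs) hab.le, mul_pos hab hab]

end SmoothSign

lemma sq_one_sub_le_one_sub_sq {t : ℝ} (h₀ : 0 ≤ t) (h₁ : t ≤ 1) : (1 - t) ^ 2 ≤ 1 - t ^ 2 := by
  nlinarith

/-- Lemma 2, second inequality: the smooth signum-type approximation satisfies
`0 ≤ |σ| - σ² √((σ² + τ² + ε²)/((σ² + τ²)(σ² + ε²))) < τ ε / √(τ² + ε²)`. -/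
theorem abs_sub_smooth_sign_approx (σ τ ε : ℝ) (hτ : 0 < τ) (hε : 0 < ε) :
    0 ≤ |σ| - σ ^ 2 * Real.sqrt ((σ ^ 2 + τ ^ 2 + ε ^ 2) /
        ((σ ^ 2 + τ ^ 2) * (σ ^ 2 + ε ^ 2))) ∧
    |σ| - σ ^ 2 * Real.sqrt ((σ ^ 2 + τ ^ 2 + ε ^ 2) /
        ((σ ^ 2 + τ ^ 2) * (σ ^ 2 + ε ^ 2))) <
      τ * ε / Real.sqrt (τ ^ 2 + ε ^ 2) := by
  set q := (σ ^ 2 + τ ^ 2 + ε ^ 2) / ((σ ^ 2 + τ ^ 2) * (σ ^ 2 + ε ^ 2))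
  have ht_sq : (|σ| * √q) ^ 2 = σ ^ 2 * q := by
    rw [mul_pow, sq_abs, Real.sq_sqrt (by positivity)]
  have ht₀ : 0 ≤ |σ| * √q := by positivity
  have ht₁ : |σ| * √q ≤ 1 := by
    rw [← pow_le_one_iff_of_nonneg ht₀ two_ne_zero, ht_sq]
    exact SmoothSign.mul_div_le_one (sq_nonneg σ) (by positivity) (by positivity)
  have hg : |σ| - σ ^ 2 * √q = |σ| * (1 - |σ| * √q) := by
    rw [← sq_abs]
    ring
  have hR : 0 < τ * ε / √(τ ^ 2 + ε ^ 2) := by positivity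
  rw [hg]
  refine ⟨mul_nonneg (abs_nonneg σ) (sub_nonneg.2 ht₁), lt_of_pow_lt_pow_left₀ 2 hR.le ?_⟩
  calc (|σ| * (1 - |σ| * √q)) ^ 2 = σ ^ 2 * (1 - |σ| * √q) ^ 2 := by rw [mul_pow, sq_abs]
    _ ≤ σ ^ 2 * (1 - σ ^ 2 * q) := by
      rw [← ht_sq]
      exact mul_le_mul_of_nonneg_left (sq_one_sub_le_one_sub_sq ht₀ ht₁) (sq_nonneg σ)
    _ < τ ^ 2 * ε ^ 2 / (τ ^ 2 + ε ^ 2) :=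
      SmoothSign.mul_one_sub_mul_div_lt (sq_nonneg σ) (by positivity) (by positivity)
    _ = (τ * ε / √(τ ^ 2 + ε ^ 2)) ^ 2 := by
      rw [div_pow, mul_pow, Real.sq_sqrt (by positivity)]
end

section
/- Let $m_c = m_{c2}/m_{c1}$ where $m_{c2}, m_{c1}$ are positive odd integers with $m_c < 1$, and set $\beta_1 = \frac{1}{1+m_c}\big[ 2^{m_c - 1} - 2^{(m_c-1)(m_c+1)} \big]$ and $\beta_2 = \frac{1}{1+m_c}\big[ \frac{2 m_c + 1}{m_c + 1} + \frac{2^{-(m_c-1)^2 (m_c+1)}}{m_c+1} - 2^{m_c - 1} \big]$. Then for all real numbers $\tilde\chi, \chi$ one has $\tilde\chi\, (\chi - \tilde\chi)^{m_c} \le -\beta_1\, \tilde\chi^{\,1+m_c} + \beta_2\, \chi^{\,1+m_c}$. -/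
/-!
Put `u = χ - χt`. Since `u · u^p = |u|^(1+p)`, the left side is `χ u^p - |u|^(1+p)`, which is at
most `|χ| |u|^p - |u|^(1+p)`. Young's inequality, with weight `1 - θ` on `|u|^(1+p)`, leaves
`-θ |u|^(1+p)`, and the power-mean bound `|χt|^(1+p) ≤ 2^p (|u|^(1+p) + |χ|^(1+p))` trades it for
`-θ 2^(-p) |χt|^(1+p) + θ |χ|^(1+p)`. The choice `θ = log 2 · p (1 - p)` dominates `2^p β₁`, and
with `2^p ≤ 1 + p` and Bernoulli's inequality the required bound on `β₂` becomes a polynomial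
inequality in `p` with room to spare.
-/

/-- Signed real power: for an exponent `p` that is a ratio of odd positive
integers, `x^p := sign(x) |x|^p`. -/
noncomputable def signedRpow (x p : ℝ) : ℝ := Real.sign x * |x| ^ p

open Real

theorem Real.sign_mul_self_eq_abs (x : ℝ) : Real.sign x * x = |x| := by
  rcases lt_trichotomy x 0 with h | rfl | h
  · rw [sign_of_neg h, abs_of_neg h]; ring
  · simp
  · rw [sign_of_pos h, abs_of_pos h]; ring

theorem Real.abs_sign_le_one (x : ℝ) : |Real.sign x| ≤ 1 := by
  rcases sign_apply_eq x with h | h | h <;> simp [h]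

theorem Real.rpow_add_le_mul_rpow_add_rpow {a b q : ℝ} (ha : 0 ≤ a) (hb : 0 ≤ b) (hq : 1 ≤ q) :
    (a + b) ^ q ≤ 2 ^ (q - 1) * (a ^ q + b ^ q) := by
  lift a to NNReal using ha
  lift b to NNReal using hb
  exact_mod_cast NNReal.rpow_add_le_mul_rpow_add_rpow a b hq

theorem Real.two_rpow_le_one_add {p : ℝ} (hp0 : 0 ≤ p) (hp1 : p ≤ 1) : (2 : ℝ) ^ p ≤ 1 + p := by
  simpa [one_add_one_eq_two] using rpow_one_add_le_one_add_mul_self (s := 1) (by norm_num) hp0 hp1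

theorem Real.one_sub_log_two_mul_le_two_rpow_neg (y : ℝ) : 1 - log 2 * y ≤ (2 : ℝ) ^ (-y) := by
  rw [rpow_def_of_pos two_pos]
  linarith [add_one_le_exp (log 2 * -y)]

theorem self_mul_signedRpow {p : ℝ} (hp : 1 + p ≠ 0) (x : ℝ) :
    x * signedRpow x p = |x| ^ (1 + p) := by
  rw [signedRpow, rpow_add' (abs_nonneg x) hp, rpow_one, ← mul_assoc, mul_comm x,
    sign_mul_self_eq_abs]

theorem mul_signedRpow_le (y x p : ℝ) : y * signedRpow x p ≤ |y| * |x| ^ p := by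
  have hsign : y * Real.sign x ≤ |y| :=
    calc y * Real.sign x ≤ |y * Real.sign x| := le_abs_self _
      _ = |y| * |Real.sign x| := abs_mul _ _
      _ ≤ |y| := mul_le_of_le_one_right (abs_nonneg y) (abs_sign_le_one x)
  rw [signedRpow, ← mul_assoc]
  exact mul_le_mul_of_nonneg_right hsign (rpow_nonneg (abs_nonneg x) p)

theorem mul_rpow_le_young {p γ x y : ℝ} (hp : 0 ≤ p) (hγ : 0 < γ) (hx : 0 ≤ x) (hy : 0 ≤ y) :
    x * y ^ p ≤ γ ^ p / (1 + p) * x ^ (1 + p) + p / ((1 + p) * γ) * y ^ (1 + p) := by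
  have h1p : 0 < 1 + p := by linarith
  have amgm := geom_mean_le_arith_mean2_weighted (w₁ := 1 / (1 + p)) (w₂ := p / (1 + p))
    (p₁ := (γ * x) ^ (1 + p)) (p₂ := y ^ (1 + p)) (by positivity) (by positivity)
    (by positivity) (by positivity) (by field_simp)
  rw [← rpow_mul (by positivity), ← rpow_mul hy, mul_one_div_cancel h1p.ne', rpow_one,
    mul_div_cancel₀ p h1p.ne', mul_rpow hγ.le hx, rpow_add hγ, rpow_one] at amgm
  rw [← mul_le_mul_iff_right₀ hγ]
  calc γ * (x * y ^ p) = γ * x * y ^ p := by ring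
    _ ≤ _ := amgm
    _ = _ := by field_simp

/-- Bernoulli's bound `γ^p ≤ 1 - p + p γ` on the optimal Young constant `γ^p / (1 + p)`,
`γ = p / (c (1 + p))`, for the inequality `x y^p ≤ K x^(1+p) + c y^(1+p)`. -/
noncomputable def youngCoeff (p c : ℝ) : ℝ := (1 - p + p ^ 2 / (c * (1 + p))) / (1 + p)

theorem mul_rpow_le_youngCoeff {p c x y : ℝ} (hp0 : 0 < p) (hp1 : p ≤ 1) (hc : 0 < c)
    (hx : 0 ≤ x) (hy : 0 ≤ y) :
    x * y ^ p ≤ youngCoeff p c * x ^ (1 + p) + c * y ^ (1 + p) := by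
  set γ := p / (c * (1 + p)) with hγ
  have hγ0 : 0 < γ := by positivity
  have bernoulli : γ ^ p ≤ 1 - p + p ^ 2 / (c * (1 + p)) := by
    have := rpow_one_add_le_one_add_mul_self (s := γ - 1) (by linarith) hp0.le hp1
    rw [add_sub_cancel, hγ] at this
    linarith [show p * (p / (c * (1 + p)) - 1) = p ^ 2 / (c * (1 + p)) - p by ring]
  have hcoeff : p / ((1 + p) * γ) = c := by
    rw [hγ]; field_simp
  calc x * y ^ p ≤ γ ^ p / (1 + p) * x ^ (1 + p) + p / ((1 + p) * γ) * y ^ (1 + p) :=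
        mul_rpow_le_young hp0.le hγ0 hx hy
    _ ≤ _ := by
        rw [hcoeff, youngCoeff]
        gcongr

theorem mul_signedRpow_sub_le {p θ : ℝ} (hp0 : 0 < p) (hp1 : p ≤ 1) (hθ0 : 0 ≤ θ) (hθ1 : θ < 1)
    (χt χ : ℝ) :
    χt * signedRpow (χ - χt) p ≤
      -(θ * 2 ^ (-p)) * |χt| ^ (1 + p) + (youngCoeff p (1 - θ) + θ) * |χ| ^ (1 + p) := by
  set u := χ - χt
  have split : χt * signedRpow u p = χ * signedRpow u p - |u| ^ (1 + p) := by
    rw [← self_mul_signedRpow (by linarith) u]; ring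
  have young := mul_rpow_le_youngCoeff hp0 hp1 (by linarith : 0 < 1 - θ) (abs_nonneg χ)
    (abs_nonneg u)
  have power_mean : 2 ^ (-p) * |χt| ^ (1 + p) ≤ |u| ^ (1 + p) + |χ| ^ (1 + p) := by
    have htri : |χt| ≤ |u| + |χ| := by
      simpa [u, add_comm] using abs_sub χ u
    calc 2 ^ (-p) * |χt| ^ (1 + p) ≤ 2 ^ (-p) * (2 ^ p * (|u| ^ (1 + p) + |χ| ^ (1 + p))) := by
          gcongr
          calc |χt| ^ (1 + p) ≤ (|u| + |χ|) ^ (1 + p) := by gcongr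
            _ ≤ 2 ^ p * (|u| ^ (1 + p) + |χ| ^ (1 + p)) := by
              simpa using rpow_add_le_mul_rpow_add_rpow (abs_nonneg u) (abs_nonneg χ)
                (by linarith : 1 ≤ 1 + p)
      _ = |u| ^ (1 + p) + |χ| ^ (1 + p) := by
          rw [← mul_assoc, ← rpow_add two_pos, neg_add_cancel, rpow_zero, one_mul]
  linarith [mul_signedRpow_le χ u p, mul_le_mul_of_nonneg_left power_mean hθ0]

theorem log_two_mul_mul_one_sub_le (p : ℝ) : log 2 * (p * (1 - p)) ≤ 7 / 40 := by
  have hq : p * (1 - p) ≤ 1 / 4 := by nlinarith [sq_nonneg (p - 1 / 2)]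
  nlinarith [log_pos one_lt_two, log_two_lt_d9]

theorem beta₁_le {p : ℝ} (hp0 : 0 ≤ p) (hp1 : p ≤ 1) :
    1 / (1 + p) * ((2 : ℝ) ^ (p - 1) - (2 : ℝ) ^ ((p - 1) * (p + 1))) ≤
      log 2 * (p * (1 - p)) * (2 : ℝ) ^ (-p) := by
  set t := (2 : ℝ) ^ p
  have ht0 : 0 < t := by positivity
  have ht : t ≤ 1 + p := two_rpow_le_one_add hp0 hp1
  have hsub : (2 : ℝ) ^ (p - 1) = t / 2 := by
    rw [rpow_sub two_pos, rpow_one]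
  have hsq : (2 : ℝ) ^ ((p - 1) * (p + 1)) = t / 2 * (2 : ℝ) ^ (-(p * (1 - p))) := by
    rw [← hsub, ← rpow_add two_pos]; ring_nf
  have hdrop := one_sub_log_two_mul_le_two_rpow_neg (p * (1 - p))
  rw [hsub, hsq, rpow_neg zero_le_two p]
  calc 1 / (1 + p) * (t / 2 - t / 2 * 2 ^ (-(p * (1 - p))))
      = t / (2 * (1 + p)) * (1 - 2 ^ (-(p * (1 - p)))) := by field_simp
    _ ≤ t / (2 * (1 + p)) * (log 2 * (p * (1 - p))) := by gcongr; linarith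
    _ ≤ t⁻¹ * (log 2 * (p * (1 - p))) := by
        have : 0 ≤ p * (1 - p) := mul_nonneg hp0 (by linarith)
        have := log_pos one_lt_two
        gcongr
        rw [div_le_iff₀ (by positivity), inv_mul_eq_div, le_div_iff₀ ht0]
        nlinarith
    _ = log 2 * (p * (1 - p)) * t⁻¹ := mul_comm _ _

theorem le_beta₂ {p : ℝ} (hp0 : 0 ≤ p) (hp1 : p ≤ 1) :
    ((1 + 2 * p) / (1 + p) - p / 2) / (1 + p) ≤ 1 / (1 + p) * ((2 * p + 1) / (p + 1) +
      (2 : ℝ) ^ (-(p - 1) ^ 2 * (p + 1)) / (p + 1) - (2 : ℝ) ^ (p - 1)) := by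
  set t := (2 : ℝ) ^ p
  have ht : t ≤ 1 + p := two_rpow_le_one_add hp0 hp1
  have hsub : (2 : ℝ) ^ (p - 1) = t / 2 := by
    rw [rpow_sub two_pos, rpow_one]
  have hmono : t / 2 ≤ (2 : ℝ) ^ (-(p - 1) ^ 2 * (p + 1)) := by
    rw [← hsub]
    exact rpow_le_rpow_of_exponent_le one_le_two (by nlinarith [sq_nonneg p])
  have hshift : t / 2 - t / 2 / (p + 1) ≤ p / 2 := by
    rw [show t / 2 - t / 2 / (p + 1) = p / 2 * (t / (p + 1)) by field_simp; ring]
    exact mul_le_of_le_one_right (by positivity) ((div_le_one (by positivity)).2 (by linarith))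
  have hinner : (1 + 2 * p) / (1 + p) - p / 2 ≤
      (2 * p + 1) / (p + 1) + (2 : ℝ) ^ (-(p - 1) ^ 2 * (p + 1)) / (p + 1) - t / 2 := by
    have : t / 2 / (p + 1) ≤ (2 : ℝ) ^ (-(p - 1) ^ 2 * (p + 1)) / (p + 1) := by gcongr
    have : (1 + 2 * p) / (1 + p) = (2 * p + 1) / (p + 1) := by ring
    linarith
  rw [hsub, one_div_mul_eq_div]
  gcongr

theorem youngCoeff_add_log_two_mul_le {p : ℝ} (hp0 : 0 ≤ p) (hp1 : p ≤ 1) :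
    youngCoeff p (1 - log 2 * (p * (1 - p))) + log 2 * (p * (1 - p)) ≤
      ((1 + 2 * p) / (1 + p) - p / 2) / (1 + p) := by
  have hθ_small := log_two_mul_mul_one_sub_le p
  set θ := log 2 * (p * (1 - p))
  have hθ : θ ≤ 7 / 10 * (p * (1 - p)) :=
    mul_le_mul_of_nonneg_right (by linarith [log_two_lt_d9]) (mul_nonneg hp0 (by linarith))
  have h1p : 0 < 1 + p := by linarith
  have hfrac : p ^ 2 / ((1 - θ) * (1 + p)) ≤ p ^ 2 / (4 / 5 * (1 + p)) := by
    gcongr; linarith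
  have hpoly : 0 ≤ 3 / 2 * p - 3 / 4 * p ^ 2 - θ * (1 + p) ^ 2 := by
    nlinarith [mul_le_mul_of_nonneg_right hθ (sq_nonneg (1 + p))]
  have hgap : (1 + 2 * p) / (1 + p) - p / 2 - (1 - p + p ^ 2 / (4 / 5 * (1 + p)) + θ * (1 + p)) =
      (3 / 2 * p - 3 / 4 * p ^ 2 - θ * (1 + p) ^ 2) / (1 + p) := by
    field_simp; ring
  rw [youngCoeff, div_add' _ _ _ h1p.ne', div_le_div_iff_of_pos_right h1p]
  linarith [div_nonneg hpoly h1p.le]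

theorem signed_power_cross_term_bound_general
    (mc1 mc2 : ℕ) (h1p : 0 < mc1) (h2p : 0 < mc2)
    (mc : ℝ) (hmc : mc = (mc2 : ℝ) / (mc1 : ℝ)) (hmclt : mc < 1)
    (β₁ β₂ : ℝ)
    (hβ₁ : β₁ = (1 / (1 + mc)) * ((2 : ℝ) ^ (mc - 1) - (2 : ℝ) ^ ((mc - 1) * (mc + 1))))
    (hβ₂ : β₂ = (1 / (1 + mc)) * ((2 * mc + 1) / (mc + 1) +
        (2 : ℝ) ^ (-(mc - 1) ^ 2 * (mc + 1)) / (mc + 1) - (2 : ℝ) ^ (mc - 1)))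
    (χt χ : ℝ) :
    χt * signedRpow (χ - χt) mc ≤ -β₁ * |χt| ^ (1 + mc) + β₂ * |χ| ^ (1 + mc) := by
  have hmc0 : 0 < mc := hmc ▸ by positivity
  have hθ0 : 0 ≤ log 2 * (mc * (1 - mc)) :=
    mul_nonneg (log_pos one_lt_two).le (mul_nonneg hmc0.le (by linarith))
  have hθ1 : log 2 * (mc * (1 - mc)) < 1 :=
    (log_two_mul_mul_one_sub_le mc).trans_lt (by norm_num)
  have hβ₁_le := hβ₁ ▸ beta₁_le hmc0.le hmclt.le
  have hβ₂_ge := (youngCoeff_add_log_two_mul_le hmc0.le hmclt.le).trans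
    (hβ₂ ▸ le_beta₂ hmc0.le hmclt.le)
  refine (mul_signedRpow_sub_le hmc0 hmclt.le hθ0 hθ1 χt χ).trans ?_
  gcongr

/-- Lemma 4: for `m_c = m_{c2}/m_{c1} < 1` a ratio of positive odd integers and
the constants `β₁, β₂` given in the paper,
`χt (χ - χt)^{m_c} ≤ -β₁ χt^{1+m_c} + β₂ χ^{1+m_c}`, where `(·)^{m_c}` is the
signed real power and `x^{1+m_c} = |x|^{1+m_c}` (even numerator over odd
denominator). -/
theorem signed_power_cross_term_bound
    (mc1 mc2 : ℕ) (h1 : Odd mc1) (h2 : Odd mc2) (h1p : 0 < mc1) (h2p : 0 < mc2)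
    (mc : ℝ) (hmc : mc = (mc2 : ℝ) / (mc1 : ℝ)) (hmclt : mc < 1)
    (β₁ β₂ : ℝ)
    (hβ₁ : β₁ = (1 / (1 + mc)) * ((2 : ℝ) ^ (mc - 1) - (2 : ℝ) ^ ((mc - 1) * (mc + 1))))
    (hβ₂ : β₂ = (1 / (1 + mc)) * ((2 * mc + 1) / (mc + 1) +
        (2 : ℝ) ^ (-(mc - 1) ^ 2 * (mc + 1)) / (mc + 1) - (2 : ℝ) ^ (mc - 1)))
    (χt χ : ℝ) :
    χt * signedRpow (χ - χt) mc ≤ -β₁ * |χt| ^ (1 + mc) + β₂ * |χ| ^ (1 + mc) :=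
  signed_power_cross_term_bound_general mc1 mc2 h1p h2p mc hmc hmclt β₁ β₂ hβ₁ hβ₂ χt χ
end

section
/- Let $n \ge 1$ be an integer and $0 < c_1 < c_2$. Define $\varpi : \mathbb{R} \to \mathbb{R}$ by $\varpi(\eta) = 1$ for $|\eta| \le c_1$, $\varpi(\eta) = \cos^n\!\big( \tfrac{\pi}{2} \sin^n\!\big( \tfrac{\pi}{2} \tfrac{\eta^2 - c_1^2}{c_2^2 - c_1^2} \big) \big)$ for $c_1 < |\eta| < c_2$, and $\varpi(\eta) = 0$ for $|\eta| \ge c_2$. Then $\varpi$ is $n$-times continuously differentiable on $\mathbb{R}$ and takes values in $[0,1]$. -/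
/-!
Writing `t η = (η² - c₁²) / (c₂² - c₁²)`, the function is `switchStep n ∘ t`, where `switchStep n`
is `1` on `(-∞, 0]`, `F = switchProfile n` on `(0, 1]` and `0` on `(1, ∞)`. Two `C^k` functions
glued at a point where their derivatives of order `≤ k` agree give a `C^k` function, and `F` is
analytic with `F - 1` vanishing to order `≥ 2n` at `0` and `F` vanishing to order `≥ 2n` at `1`.
As `2n > n`, the three pieces glue to a `C^n` function. The bounds come from those of `sin` and
`cos` on `[0, π/2]`.
-/
open Real Set Topology

section Gluing

variable {E : Type*} [NormedAddCommGroup E] [NormedSpace ℝ E] {f g : ℝ → E} {a : ℝ}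

theorem hasDerivAt_ite_le_self {f' : E} (hf : HasDerivAt f f' a) (hg : HasDerivAt g f' a)
    (hfg : f a = g a) : HasDerivAt (fun x => if x ≤ a then f x else g x) f' a := by
  have hleft : HasDerivWithinAt (fun x => if x ≤ a then f x else g x) f' (Iic a) a :=
    hf.hasDerivWithinAt.congr (fun x hx => if_pos hx) (if_pos le_rfl)
  have hright : HasDerivWithinAt (fun x => if x ≤ a then f x else g x) f' (Ici a) a := by
    refine hg.hasDerivWithinAt.congr (fun x hx => ?_) (by simp [hfg])
    rcases (mem_Ici.1 hx).eq_or_lt with rfl | hx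
    · simp [hfg]
    · exact if_neg hx.not_ge
  simpa [Iic_union_Ici] using hleft.union hright

theorem hasDerivAt_ite_le (hf : Differentiable ℝ f) (hg : Differentiable ℝ g) (h₀ : f a = g a)
    (h₁ : deriv f a = deriv g a) (x : ℝ) :
    HasDerivAt (fun x => if x ≤ a then f x else g x)
      (if x ≤ a then deriv f x else deriv g x) x := by
  rcases lt_trichotomy x a with hx | rfl | hx
  · rw [if_pos hx.le]
    exact (hf x).hasDerivAt.congr_of_eventuallyEq
      ((eventually_lt_nhds hx).mono fun y hy => if_pos hy.le)
  · rw [if_pos le_rfl]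
    exact hasDerivAt_ite_le_self (hf x).hasDerivAt (h₁ ▸ (hg x).hasDerivAt) h₀
  · rw [if_neg hx.not_ge]
    exact (hg x).hasDerivAt.congr_of_eventuallyEq
      ((eventually_gt_nhds hx).mono fun y hy => if_neg hy.not_ge)

theorem contDiff_ite_le {k : ℕ} (hf : ContDiff ℝ k f) (hg : ContDiff ℝ k g)
    (h : ∀ j ≤ k, iteratedDeriv j f a = iteratedDeriv j g a) :
    ContDiff ℝ k (fun x => if x ≤ a then f x else g x) := by
  induction k generalizing f g with
  | zero =>
    rw [Nat.cast_zero, contDiff_zero] at hf hg ⊢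
    exact hf.if_le hg continuous_id continuous_const fun x hx => by
      simpa [hx] using h 0 le_rfl
  | succ k ih =>
    rw [Nat.cast_succ, contDiff_succ_iff_deriv] at hf hg ⊢
    have hφ := hasDerivAt_ite_le hf.1 hg.1 (by simpa using h 0 (by omega))
      (by simpa using h 1 (by omega))
    refine ⟨fun x => (hφ x).differentiableAt, by simp, ?_⟩
    rw [show deriv _ = _ from funext fun x => (hφ x).deriv]
    exact ih hf.2.2 hg.2.2 fun j hj => by
      simpa only [iteratedDeriv_succ'] using h (j + 1) (by omega)

end Gluing

section AnalyticOrder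

variable {𝕜 E : Type*} [NontriviallyNormedField 𝕜] [CharZero 𝕜] [NormedAddCommGroup E]
  [NormedSpace 𝕜 E] [CompleteSpace E] {f g : 𝕜 → E} {a : 𝕜}

theorem AnalyticAt.iteratedDeriv_eq_of_lt_analyticOrderAt_sub {j : ℕ} (hf : AnalyticAt 𝕜 f a)
    (hg : AnalyticAt 𝕜 g a) (hj : (j : ℕ∞) < analyticOrderAt (f - g) a) :
    iteratedDeriv j f a = iteratedDeriv j g a := by
  have := (natCast_le_analyticOrderAt_iff_iteratedDeriv_eq_zero (hf.sub hg)).1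
    (by exact_mod_cast Order.add_one_le_of_lt hj) j j.lt_succ_self
  rwa [iteratedDeriv_sub hf.contDiffAt hg.contDiffAt, sub_eq_zero] at this

theorem AnalyticAt.two_le_analyticOrderAt (hf : AnalyticAt 𝕜 f a) (h₀ : f a = 0)
    (h₁ : deriv f a = 0) : 2 ≤ analyticOrderAt f a := by
  rw [← Nat.cast_ofNat, natCast_le_analyticOrderAt_iff_iteratedDeriv_eq_zero hf]
  intro i hi
  interval_cases i <;> simpa

end AnalyticOrder

noncomputable def switchProfile (n : ℕ) (s : ℝ) : ℝ :=
  cos (π / 2 * sin (π / 2 * s) ^ n) ^ n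

theorem analyticAt_switchProfile (n : ℕ) (s : ℝ) : AnalyticAt ℝ (switchProfile n) s := by
  unfold switchProfile; fun_prop

theorem switchProfile_one {n : ℕ} (hn : n ≠ 0) : switchProfile n 1 = 0 := by
  simp [switchProfile, hn]

theorem switchProfile_mem_Icc (n : ℕ) {s : ℝ} (hs : s ∈ Icc 0 1) : switchProfile n s ∈ Icc 0 1 := by
  have hsin₀ : 0 ≤ sin (π / 2 * s) :=
    sin_nonneg_of_nonneg_of_le_pi (by nlinarith [pi_pos, hs.1]) (by nlinarith [pi_pos, hs.2])
  have hsin₁ : sin (π / 2 * s) ^ n ≤ 1 := pow_le_one₀ hsin₀ (sin_le_one _)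
  have hcos₀ : 0 ≤ cos (π / 2 * sin (π / 2 * s) ^ n) :=
    cos_nonneg_of_mem_Icc ⟨by nlinarith [pi_pos, pow_nonneg hsin₀ n], by nlinarith [pi_pos]⟩
  exact ⟨pow_nonneg hcos₀ n, pow_le_one₀ hcos₀ (cos_le_one _)⟩

/-- `switchProfile n - 1 = (cos ^ n - 1) ∘ (π/2 · sin ^ n (π/2 ·))`; the outer factor has a
double zero at `0` and the inner one a zero of order `n`. -/
theorem two_mul_le_analyticOrderAt_switchProfile_sub_one {n : ℕ} (hn : n ≠ 0) :
    2 * (n : ℕ∞) ≤ analyticOrderAt (fun s => switchProfile n s - 1) 0 := by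
  set u : ℝ → ℝ := fun s => π / 2 * sin (π / 2 * s) ^ n
  have hu : AnalyticAt ℝ u 0 := by fun_prop
  have hcomp : (fun s => switchProfile n s - 1) = (fun y => cos y ^ n - 1) ∘ u := rfl
  have hu₀ : u 0 = 0 := by simp [u, hn]
  have houter : 2 ≤ analyticOrderAt (fun y => cos y ^ n - 1) (u 0) := by
    rw [hu₀]
    exact AnalyticAt.two_le_analyticOrderAt (by fun_prop) (by simp) (by simp)
  have hinner : (n : ℕ∞) ≤ analyticOrderAt (fun s => u s - u 0) 0 := by
    have hsin : AnalyticAt ℝ (fun s => sin (π / 2 * s)) 0 := by fun_prop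
    have hsin₀ : 1 ≤ analyticOrderAt (fun s => sin (π / 2 * s)) 0 :=
      Order.one_le_iff_ne_zero.2 (analyticOrderAt_ne_zero.2 ⟨hsin, by simp⟩)
    have hconst : analyticOrderAt (fun _ => π / 2 : ℝ → ℝ) 0 = 0 :=
      analyticOrderAt_eq_zero.2 (.inr (by positivity))
    have : (fun s => u s - u 0) = (fun _ => π / 2) * (fun s => sin (π / 2 * s)) ^ n := by
      funext s; simp [u, hu₀]
    rw [this, analyticOrderAt_mul analyticAt_const (hsin.pow n), analyticOrderAt_pow hsin, hconst,
      zero_add]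
    simpa using nsmul_le_nsmul_right hsin₀ n
  rw [hcomp, AnalyticAt.analyticOrderAt_comp (by fun_prop) hu]
  exact mul_le_mul' houter hinner

/-- `switchProfile n = (cos ∘ u) ^ n` with `u = π/2 · sin ^ n (π/2 ·)`: `cos` has a simple zero at
`u 1 = π/2`, which `u` attains with zero derivative. -/
theorem two_mul_le_analyticOrderAt_switchProfile_one (n : ℕ) :
    2 * (n : ℕ∞) ≤ analyticOrderAt (switchProfile n) 1 := by
  set u : ℝ → ℝ := fun s => π / 2 * sin (π / 2 * s) ^ n
  have hcomp : switchProfile n = (cos ∘ u) ^ n := rfl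
  have hu : HasDerivAt u 0 1 := by
    simpa using (((hasDerivAt_id (1 : ℝ)).const_mul (π / 2)).sin.pow n).const_mul (π / 2)
  have hcos : 1 ≤ analyticOrderAt cos (u 1) :=
    Order.one_le_iff_ne_zero.2 (analyticOrderAt_ne_zero.2 ⟨by fun_prop, by simp [u]⟩)
  have hinner : 2 ≤ analyticOrderAt (fun s => u s - u 1) 1 :=
    AnalyticAt.two_le_analyticOrderAt (by fun_prop) (sub_self _) (by rw [deriv_sub_const, hu.deriv])
  rw [hcomp, analyticOrderAt_pow (by fun_prop),
    AnalyticAt.analyticOrderAt_comp (by fun_prop) (by fun_prop)]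
  calc 2 * (n : ℕ∞) = n • (1 * 2) := by simp [mul_comm]
    _ ≤ _ := nsmul_le_nsmul_right (mul_le_mul' hcos hinner) n

noncomputable def switchStep (n : ℕ) (s : ℝ) : ℝ :=
  if s ≤ 0 then 1 else if s ≤ 1 then switchProfile n s else 0

theorem switchStep_of_one_le {n : ℕ} (hn : n ≠ 0) {s : ℝ} (hs : 1 ≤ s) : switchStep n s = 0 := by
  rcases hs.eq_or_lt with rfl | hs
  · simp [switchStep, switchProfile_one hn]
  · simp [switchStep, hs.not_ge, (zero_lt_one.trans hs).not_ge]

theorem switchStep_mem_Icc (n : ℕ) (s : ℝ) : switchStep n s ∈ Icc 0 1 := by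
  unfold switchStep
  split_ifs with h₀ h₁
  · simp
  · exact switchProfile_mem_Icc n ⟨(not_le.1 h₀).le, h₁⟩
  · simp

theorem contDiff_switchStep {n : ℕ} (hn : 1 ≤ n) : ContDiff ℝ n (switchStep n) := by
  have hlt : ∀ j ≤ n, (j : ℕ∞) < 2 * n := fun j hj => by exact_mod_cast (by omega : j < 2 * n)
  have hF : ContDiff ℝ n (switchProfile n) := by unfold switchProfile; fun_prop
  set G : ℝ → ℝ := fun s => if s ≤ 1 then switchProfile n s else 0
  have hG : ContDiff ℝ n G := contDiff_ite_le hF contDiff_const fun j hj =>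
    (analyticAt_switchProfile n 1).iteratedDeriv_eq_of_lt_analyticOrderAt_sub analyticAt_const
      (by rw [← Pi.zero_def, sub_zero]
          exact (hlt j hj).trans_le (two_mul_le_analyticOrderAt_switchProfile_one n))
  have hGF : G =ᶠ[𝓝 0] switchProfile n := (eventually_lt_nhds one_pos).mono fun s hs => if_pos hs.le
  refine contDiff_ite_le contDiff_const hG fun j hj => ?_
  rw [hGF.iteratedDeriv_eq]
  exact ((analyticAt_switchProfile n 0).iteratedDeriv_eq_of_lt_analyticOrderAt_sub analyticAt_const
    ((hlt j hj).trans_le (two_mul_le_analyticOrderAt_switchProfile_sub_one (by omega)))).symm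

/-- The smooth switching (bump-type) function used in the switch indicator:
equal to `1` on `[-c₁, c₁]`, equal to
`cosⁿ((π/2) sinⁿ((π/2)(η² - c₁²)/(c₂² - c₁²)))` on the transition region, and
equal to `0` outside `(-c₂, c₂)`.  It is `n`-times continuously differentiable
and takes values in `[0,1]`. -/
theorem switching_function_smooth_and_bounded
    (n : ℕ) (hn : 1 ≤ n) (c₁ c₂ : ℝ) (hc₁ : 0 < c₁) (hc₁₂ : c₁ < c₂)
    (ϖ : ℝ → ℝ)
    (h_inner : ∀ η : ℝ, |η| ≤ c₁ → ϖ η = 1)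
    (h_mid : ∀ η : ℝ, c₁ < |η| → |η| < c₂ →
      ϖ η = (Real.cos ((π / 2) *
        (Real.sin ((π / 2) * ((η ^ 2 - c₁ ^ 2) / (c₂ ^ 2 - c₁ ^ 2)))) ^ n)) ^ n)
    (h_outer : ∀ η : ℝ, c₂ ≤ |η| → ϖ η = 0) :
    ContDiff ℝ (n : ℕ∞) ϖ ∧ ∀ η : ℝ, ϖ η ∈ Set.Icc (0 : ℝ) 1 := by
  have hd : 0 < c₂ ^ 2 - c₁ ^ 2 := by nlinarith
  have hϖ : ϖ = fun η => switchStep n ((η ^ 2 - c₁ ^ 2) / (c₂ ^ 2 - c₁ ^ 2)) := by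
    funext η
    have hη : η ^ 2 = |η| ^ 2 := (sq_abs η).symm
    rcases le_or_gt |η| c₁ with h₁ | h₁
    · rw [h_inner η h₁, switchStep,
        if_pos (div_nonpos_of_nonpos_of_nonneg (by nlinarith [abs_nonneg η]) hd.le)]
    rcases lt_or_ge |η| c₂ with h₂ | h₂
    · rw [h_mid η h₁ h₂, switchStep, if_neg (div_pos (by nlinarith) hd).not_ge,
        if_pos ((div_le_one hd).2 (by nlinarith))]
      rfl
    · rw [h_outer η h₂, switchStep_of_one_le (by omega) ((one_le_div hd).2 (by nlinarith))]
  subst hϖ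
  exact ⟨(contDiff_switchStep hn).comp (by fun_prop), fun η => switchStep_mem_Icc n _⟩
end
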